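/- arXiv:1805.10098 — 4 statements merged into one kernel-verified Lean document; each statement's English description precedes it below -/
import Mathlib

section
/- Let (X,d) be a compact metric space and let f : X → X be continuous. Then f has the pseudo periodic shadowing property if and only if the restriction of f to its chain recurrent set CR(f) has the shadowing property. -/
/-! Common definitions: distances on maps/homeomorphisms of a metric space,
topological stability and shadowing-type properties. -/

variable {X : Type*} [MetricSpace X]

/-- The `C⁰`-distance `d_{C⁰}(f,g) = sup_{x ∈ X} d (f x) (g x)` between self-maps. -/
noncomputable def dC0 (f g : X → X) : ℝ :=
  ⨆ x : X, dist (f x) (g x)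

/-- The distance `D(f,g) = max (d_{C⁰}(f,g)) (d_{C⁰}(f⁻¹,g⁻¹))` between homeomorphisms. -/
noncomputable def DH (f g : X ≃ₜ X) : ℝ :=
  max (dC0 (f : X → X) (g : X → X)) (dC0 (f.symm : X → X) (g.symm : X → X))

/-- `f` is topologically stable. -/
def TopologicallyStable (f : X ≃ₜ X) : Prop :=
  ∀ ε > 0, ∃ δ > 0, ∀ g : X ≃ₜ X, DH f g < δ →
    ∃ h : X → X, Continuous h ∧ dC0 h id < ε ∧ h ∘ (g : X → X) = (f : X → X) ∘ h

/-- `f` is topologically stable in the strong sense (the conjugating map is surjective). -/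
def STopologicallyStable (f : X ≃ₜ X) : Prop :=
  ∀ ε > 0, ∃ δ > 0, ∀ g : X ≃ₜ X, DH f g < δ →
    ∃ h : X → X, Continuous h ∧ Function.Surjective h ∧ dC0 h id < ε ∧
      h ∘ (g : X → X) = (f : X → X) ∘ h

/-- `f` has the shadowing property. -/
def HasShadowing (f : X ≃ₜ X) : Prop :=
  ∀ ε > 0, ∃ δ > 0, ∀ x : ℕ → X,
    (∀ i, dist (f (x i)) (x (i + 1)) ≤ δ) →
    ∃ p : X, ∀ i, dist (x i) ((f : X → X)^[i] p) ≤ ε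

/-- `f` has the strict periodic shadowing property: every `δ`-cycle of length `m`
is `ε`-shadowed by a point `p` with `f^[m] p = p`. -/
def StrictPeriodicShadowing (f : X ≃ₜ X) : Prop :=
  ∀ ε > 0, ∃ δ > 0, ∀ (m : ℕ) (x : ℕ → X), 1 ≤ m →
    (∀ i < m, dist (f (x i)) (x (i + 1)) ≤ δ) → x 0 = x m →
    ∃ p : X, (f : X → X)^[m] p = p ∧ ∀ i ≤ m, dist (x i) ((f : X → X)^[i] p) ≤ ε

/-- `f` has the periodic shadowing property: every `δ`-cycle is `ε`-shadowed by
a periodic point of `f`. -/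
def PeriodicShadowing (f : X ≃ₜ X) : Prop :=
  ∀ ε > 0, ∃ δ > 0, ∀ (m : ℕ) (x : ℕ → X), 1 ≤ m →
    (∀ i < m, dist (f (x i)) (x (i + 1)) ≤ δ) → x 0 = x m →
    ∃ p ∈ Function.periodicPts (f : X → X), ∀ i ≤ m, dist (x i) ((f : X → X)^[i] p) ≤ ε

/-- `x` is a chain recurrent point of `f`: for every `δ > 0` there is a `δ`-cycle
of `f` through `x`. -/
def ChainRecurrent (f : X → X) (x : X) : Prop :=
  ∀ δ > 0, ∃ (m : ℕ) (c : ℕ → X), 1 ≤ m ∧ c 0 = x ∧ c m = x ∧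
    ∀ i < m, dist (f (c i)) (c (i + 1)) ≤ δ

/-- `f` has the pseudo periodic shadowing property: every `δ`-cycle is `ε`-shadowed
by some (not necessarily periodic) point. -/
def PseudoPeriodicShadowing (f : X → X) : Prop :=
  ∀ ε > 0, ∃ δ > 0, ∀ (m : ℕ) (x : ℕ → X), 1 ≤ m →
    (∀ i < m, dist (f (x i)) (x (i + 1)) ≤ δ) → x 0 = x m →
    ∃ p : X, ∀ i ≤ m, dist (x i) (f^[i] p) ≤ ε

/-- The property* of a compact metric space. -/
def PropertyStar (Y : Type*) [MetricSpace Y] : Prop :=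
  ∀ ε > 0, ∃ δ > 0, ∀ (n : ℕ) (x y : Fin n → Y), 1 ≤ n →
    Function.Injective x → Function.Injective y →
    (∀ i, dist (x i) (y i) < δ) →
    ∃ φ : Y ≃ₜ Y, DH φ (Homeomorph.refl Y) < ε ∧ ∀ i, φ (x i) = y i

/-- `f` is an equicontinuous homeomorphism: the family of all iterates
`f^n`, `n ∈ ℤ`, is uniformly equicontinuous. -/
def EquicontinuousHomeo (f : X ≃ₜ X) : Prop :=
  ∀ ε > 0, ∃ δ > 0, ∀ x y : X, dist x y ≤ δ →
    ∀ n : ℤ, dist ((f.toEquiv ^ n) x) ((f.toEquiv ^ n) y) ≤ ε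

/-- The set of bi-infinite `δ`-pseudo orbits of `f`. -/
def PseudoOrbitsZ (f : X ≃ₜ X) (δ : ℝ) : Set (ℤ → X) :=
  {x | ∀ i : ℤ, dist (f (x i)) (x (i + 1)) ≤ δ}

/-- `f` has the continuous shadowing property. -/
def ContinuousShadowing (f : X ≃ₜ X) : Prop :=
  ∀ ε > 0, ∃ δ > 0, ∃ r : PseudoOrbitsZ f δ → X, Continuous r ∧
    ∀ x : PseudoOrbitsZ f δ, ∀ i : ℤ,
      dist ((f.toEquiv ^ i) (r x)) ((x : ℤ → X) i) ≤ ε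

/-- `x` is a non-wandering point of `f`. -/
def NonWandering (f : X ≃ₜ X) (x : X) : Prop :=
  ∀ U ∈ nhds x, ∃ n : ℕ, 0 < n ∧ ∃ y ∈ U, (f : X → X)^[n] y ∈ U

section PPSauxsec

open Filter Topology

namespace PPSaux

variable {X : Type*} [MetricSpace X] {f : X → X}

lemma unif [CompactSpace X] (hf : Continuous f) :
    ∀ η > (0:ℝ), ∃ γ > (0:ℝ), ∀ u v : X, dist u v ≤ γ → dist (f u) (f v) ≤ η := by
  intro η hη
  obtain ⟨γ, hγ, h⟩ := Metric.uniformContinuous_iff.mp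
    (CompactSpace.uniformContinuous_of_continuous hf) η hη
  exact ⟨γ/2, by linarith, fun u v huv => (h (lt_of_le_of_lt huv (by linarith))).le⟩

lemma cycle_mod {δ : ℝ} {m : ℕ} {c : ℕ → X} (hm : 1 ≤ m) (hc : c 0 = c m)
    (hj : ∀ i < m, dist (f (c i)) (c (i+1)) ≤ δ) :
    ∀ i, dist (f (c (i % m))) (c ((i+1) % m)) ≤ δ := by
  intro i
  have hml : i % m < m := Nat.mod_lt _ hm
  rcases eq_or_lt_of_le hm with hm1 | hm2
  · -- m = 1
    have hm1' : m = 1 := hm1.symm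
    subst hm1'
    simp only [Nat.mod_one]
    have := hj 0 (by omega)
    rwa [← hc] at this
  · have h1 : (i+1) % m = (i % m + 1) % m := by
      conv_lhs => rw [Nat.add_mod]
      rw [Nat.mod_eq_of_lt hm2]
    by_cases h : i % m + 1 = m
    · rw [h1, h, Nat.mod_self]
      have := hj (i % m) hml
      rwa [h, ← hc] at this
    · rw [h1, Nat.mod_eq_of_lt (show i % m + 1 < m by omega)]
      exact hj _ hml


/-- A small cycle near `z` yields a `δ₀`-cycle based at `z`. -/
lemma cycle_transfer [CompactSpace X] (hf : Continuous f) :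
    ∀ δ0 > (0:ℝ), ∃ γ > 0, γ ≤ δ0 ∧ ∀ (m : ℕ) (c : ℕ → X) (z : X), 1 ≤ m →
      (∀ i < m, dist (f (c i)) (c (i+1)) ≤ γ) → c 0 = c m → dist (c 0) z ≤ γ →
      ∃ (m' : ℕ) (c' : ℕ → X), 1 ≤ m' ∧ c' 0 = z ∧ c' m' = z ∧
        ∀ i < m', dist (f (c' i)) (c' (i+1)) ≤ δ0 := by
  intro δ0 h0
  obtain ⟨γ1, hγ1, hmod⟩ := unif hf (δ0/3) (by linarith)
  refine ⟨min γ1 (δ0/3), by positivity, (min_le_right _ _).trans (by linarith), ?_⟩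
  intro m c z hm hj hcc hz
  have hγa : min γ1 (δ0/3) ≤ γ1 := min_le_left _ _
  have hγb : min γ1 (δ0/3) ≤ δ0/3 := min_le_right _ _
  set c' : ℕ → X := fun i => if i = 0 ∨ i = m then z else c i with hc'
  refine ⟨m, c', hm, by simp [hc'], by simp [hc'], ?_⟩
  intro i hi
  have hfz : dist (f z) (f (c 0)) ≤ δ0/3 := by
    apply hmod
    rw [dist_comm]; exact hz.trans hγa
  by_cases hi0 : i = 0
  · subst hi0
    have e0 : c' 0 = z := by simp [hc']
    rw [e0]
    by_cases h1m : 1 = m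
    · have e1 : c' 1 = z := by simp [hc', h1m]
      rw [e1]
      have h01 : dist (f (c 0)) (c 1) ≤ min γ1 (δ0/3) := hj 0 hm
      have hc1 : c 1 = c 0 := by rw [← h1m] at hcc; exact hcc.symm
      calc dist (f z) z ≤ dist (f z) (f (c 0)) + dist (f (c 0)) (c 1) + dist (c 1) z :=
            dist_triangle4 _ _ _ _
        _ ≤ δ0/3 + δ0/3 + δ0/3 := by
            refine add_le_add (add_le_add hfz (h01.trans hγb)) ?_
            rw [hc1]; exact hz.trans hγb
        _ = δ0 := by ring
    · have e1 : c' 1 = c 1 := by simp [hc']; omega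
      rw [e1]
      calc dist (f z) (c 1) ≤ dist (f z) (f (c 0)) + dist (f (c 0)) (c 1) := dist_triangle _ _ _
        _ ≤ δ0/3 + δ0/3 := add_le_add hfz ((hj 0 hm).trans hγb)
        _ ≤ δ0 := by linarith
  · have ei : c' i = c i := by simp only [hc']; rw [if_neg (by omega)]
    rw [ei]
    by_cases him : i + 1 = m
    · have e1 : c' (i+1) = z := by simp [hc', him]
      rw [e1]
      calc dist (f (c i)) z ≤ dist (f (c i)) (c (i+1)) + dist (c (i+1)) z := dist_triangle _ _ _
        _ ≤ δ0/3 + δ0/3 := by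
            refine add_le_add ((hj i hi).trans hγb) ?_
            rw [him, ← hcc]; exact hz.trans hγb
        _ ≤ δ0 := by linarith
    · have e1 : c' (i+1) = c (i+1) := by simp only [hc']; rw [if_neg (by omega)]
      rw [e1]
      exact (hj i hi).trans (hγb.trans (by linarith))

/-- A point approximated by chain recurrent points is chain recurrent. -/
lemma CR_of_approx [CompactSpace X] (hf : Continuous f) {z : X}
    (h : ∀ γ > (0:ℝ), ∃ w, ChainRecurrent f w ∧ dist w z ≤ γ) : ChainRecurrent f z := by
  intro δ0 h0
  obtain ⟨γ, hγ, -, Htr⟩ := cycle_transfer hf δ0 h0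
  obtain ⟨w, hw, hwz⟩ := h γ hγ
  obtain ⟨m, c, hm, hc0, hcm, hj⟩ := hw γ hγ
  obtain ⟨m', c', H⟩ := Htr m c z hm hj (hc0.trans hcm.symm) (hc0.symm ▸ hwz)
  exact ⟨m', c', H⟩

/-- ω-limit style points are chain recurrent. -/
lemma omega_CR [CompactSpace X] (hf : Continuous f) {q z : X}
    (h : ∀ γ > (0:ℝ), ∀ M : ℕ, ∃ k, M ≤ k ∧ dist (f^[k] q) z ≤ γ) :
    ChainRecurrent f z := by
  intro δ0 h0
  obtain ⟨γ, hγ, -, Htr⟩ := cycle_transfer hf δ0 h0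
  obtain ⟨k, -, hk⟩ := h (γ/2) (by linarith) 0
  obtain ⟨l, hl, hlz⟩ := h (γ/2) (by linarith) (k+1)
  set m := l - k with hmdef
  have hm : 1 ≤ m := by omega
  set c : ℕ → X := fun i => if i = m then f^[k] q else f^[k+i] q with hc
  have hc0 : c 0 = f^[k] q := by simp only [hc]; rw [if_neg (by omega), Nat.add_zero]
  have hcm : c m = f^[k] q := by simp [hc]
  have hj : ∀ i < m, dist (f (c i)) (c (i+1)) ≤ γ := by
    intro i hi
    have ei : c i = f^[k+i] q := by simp only [hc]; rw [if_neg (by omega)]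
    have efc : f (f^[k+i] q) = f^[k+i+1] q := (Function.iterate_succ_apply' f (k+i) q).symm
    rw [ei, efc]
    by_cases him : i + 1 = m
    · have e1 : c (i+1) = f^[k] q := by simp [hc, him]
      rw [e1]
      have hkl : k + i + 1 = l := by omega
      rw [hkl]
      calc dist (f^[l] q) (f^[k] q) ≤ dist (f^[l] q) z + dist z (f^[k] q) := dist_triangle _ _ _
        _ ≤ γ/2 + γ/2 := add_le_add hlz (dist_comm z _ ▸ hk)
        _ = γ := by ring
    · have e1 : c (i+1) = f^[k+(i+1)] q := by simp only [hc]; rw [if_neg him]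
      rw [e1, show k + (i+1) = k + i + 1 by omega]
      simp only [dist_self]; linarith
  obtain ⟨m', c', H⟩ := Htr m c z hm hj (hc0.trans hcm.symm) (by rw [hc0]; exact hk.trans (by linarith))
  exact ⟨m', c', H⟩


/-- Every point of a `δ`-cycle is `ε`-close to the chain recurrent set. -/
lemma near_CR [CompactSpace X] (hf : Continuous f) :
    ∀ ε > (0:ℝ), ∃ δ > (0:ℝ), ∀ (m : ℕ) (c : ℕ → X), 1 ≤ m →
      (∀ i < m, dist (f (c i)) (c (i+1)) ≤ δ) → c 0 = c m →
      ∀ i < m, ∃ y, ChainRecurrent f y ∧ dist (c i) y ≤ ε := by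
  intro ε hε
  by_contra hcon
  push_neg at hcon
  have H : ∀ n : ℕ, ∃ (m : ℕ) (c : ℕ → X) (i : ℕ), 1 ≤ m ∧
      (∀ j < m, dist (f (c j)) (c (j+1)) ≤ 1/(n+1)) ∧ c 0 = c m ∧ i < m ∧
      ∀ y, ChainRecurrent f y → ε < dist (c i) y := by
    intro n
    obtain ⟨m, c, hm, hj, hcc, i, hi, hbad⟩ := hcon (1/(n+1)) (by positivity)
    exact ⟨m, c, i, hm, hj, hcc, hi, hbad⟩
  choose mm cc ii hm hj hcc hi hbad using H
  -- rotated cycles based at z n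
  set z : ℕ → X := fun n => cc n (ii n) with hz
  set r : ℕ → ℕ → X := fun n j => cc n ((ii n + j) % mm n) with hr
  have hr0 : ∀ n, r n 0 = z n := by
    intro n; simp only [hr, hz, Nat.add_zero]
    rw [Nat.mod_eq_of_lt (hi n)]
  have hrm : ∀ n, r n (mm n) = z n := by
    intro n; simp only [hr, hz]
    rw [Nat.add_mod_right, Nat.mod_eq_of_lt (hi n)]
  have hrj : ∀ n, ∀ j < mm n, dist (f (r n j)) (r n (j+1)) ≤ 1/(n+1) := by
    intro n j _
    have := cycle_mod (f := f) (hm n) (hcc n) (hj n) (ii n + j)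
    simpa [hr, Nat.add_assoc] using this
  obtain ⟨p, -, φ, hφ, hlim⟩ := IsCompact.tendsto_subseq isCompact_univ
    (x := z) (fun n => Set.mem_univ _)
  have hCRp : ChainRecurrent f p := by
    intro δ0 h0
    obtain ⟨γ, hγ, -, Htr⟩ := cycle_transfer hf δ0 h0
    obtain ⟨N1, hN1⟩ := Metric.tendsto_atTop.mp hlim γ hγ
    obtain ⟨N2, hN2⟩ := exists_nat_ge (1/γ)
    set n := max N1 N2 with hn
    have hsmall : 1/((φ n : ℝ)+1) ≤ γ := by
      have h1 : (N2 : ℝ) ≤ φ n := by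
        have : N2 ≤ φ n := le_trans (le_max_right N1 N2) (hφ.le_apply)
        exact_mod_cast this
      rw [div_le_iff₀ (by positivity)]
      have hγN : 1 ≤ γ * N2 := by nlinarith [(div_le_iff₀ hγ).mp hN2]
      nlinarith [mul_le_mul_of_nonneg_left h1 hγ.le]
    have hdist : dist (z (φ n)) p ≤ γ := (hN1 n (le_max_left _ _)).le
    obtain ⟨m', c', Hres⟩ := Htr (mm (φ n)) (r (φ n)) p (hm _)
      (fun j hjlt => (hrj _ j hjlt).trans hsmall)
      ((hr0 _).trans (hrm _).symm)
      (by rw [hr0]; exact hdist)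
    exact ⟨m', c', Hres⟩
  obtain ⟨N, hN⟩ := Metric.tendsto_atTop.mp hlim ε hε
  exact absurd (hbad (φ N) p hCRp) (not_lt.mpr (hN N le_rfl).le)

/-- Reverse chains: if `dist (f b) a ≤ δ` and `b` is chain recurrent, there is a
`θ`-chain from `a` to `b`. -/
lemma back_chain [CompactSpace X] (hf : Continuous f) :
    ∀ θ > (0:ℝ), ∃ δ > (0:ℝ), δ ≤ θ ∧ ∀ a b : X, ChainRecurrent f b →
      dist (f b) a ≤ δ → ∃ (k : ℕ) (c : ℕ → X), 1 ≤ k ∧ c 0 = a ∧ c k = b ∧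
        ∀ i < k, dist (f (c i)) (c (i+1)) ≤ θ := by
  intro θ hθ
  obtain ⟨γ1, hγ1, hmod⟩ := unif hf (θ/2) (by linarith)
  refine ⟨min (γ1/2) (θ/2), by positivity, (min_le_right _ _).trans (by linarith), ?_⟩
  set δ := min (γ1/2) (θ/2) with hδdef
  have hδ1 : δ ≤ γ1/2 := min_le_left _ _
  have hδ2 : δ ≤ θ/2 := min_le_right _ _
  intro a b hb hba
  obtain ⟨m, e, hm, he0, hem, hej⟩ := hb δ (by positivity)
  have hemod : ∀ j, dist (f (e (j % m))) (e ((j+1) % m)) ≤ δ :=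
    cycle_mod hm (he0.trans hem.symm) hej
  set c : ℕ → X := fun i => if i = 0 then a else e ((i+1) % m) with hc
  refine ⟨2*m - 1, c, by omega, by simp [hc], ?_, ?_⟩
  · have h2m : ¬(2*m - 1 = 0) := by omega
    simp only [hc]
    rw [if_neg h2m, show 2*m - 1 + 1 = 2*m by omega]
    rw [show 2*m = m*2 by ring, Nat.mul_mod_right]
    exact he0.symm ▸ he0  -- e 0 = b
  · intro i hilt
    by_cases hi0 : i = 0
    · subst hi0
      have e0 : c 0 = a := by simp [hc]
      have e1 : c 1 = e (2 % m) := by simp only [hc]; rw [if_neg one_ne_zero]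
      rw [e0, e1]
      have hae1 : dist a (e (1 % m)) ≤ 2*δ := by
        calc dist a (e (1 % m)) ≤ dist a (f b) + dist (f b) (e (1 % m)) := dist_triangle _ _ _
          _ ≤ δ + δ := by
              refine add_le_add (dist_comm (f b) a ▸ hba) ?_
              have := hemod 0
              rwa [Nat.zero_mod, he0, Nat.zero_add] at this
          _ = 2*δ := by ring
      calc dist (f a) (e (2 % m))
          ≤ dist (f a) (f (e (1 % m))) + dist (f (e (1 % m))) (e (2 % m)) := dist_triangle _ _ _
        _ ≤ θ/2 + δ := by
            refine add_le_add (hmod _ _ (hae1.trans (by linarith))) ?_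
            have := hemod 1
            rwa [show (1:ℕ)+1 = 2 by rfl] at this
        _ ≤ θ := by linarith
    · have ei : c i = e ((i+1) % m) := by simp only [hc]; rw [if_neg hi0]
      have ei1 : c (i+1) = e ((i+2) % m) := by
        simp only [hc]; rw [if_neg (by omega), show i+1+1 = i+2 by rfl]
      rw [ei, ei1]
      have := hemod (i+1)
      rw [show i+1+1 = i+2 by rfl] at this
      exact this.trans (hδ2.trans (by linarith))

end PPSaux

end PPSauxsec

/-- A continuous self-map of a compact metric space has the pseudo
periodic shadowing property iff its restriction to the chain recurrent set has the
shadowing property. -/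
theorem pseudoPeriodicShadowing_iff_shadowing_on_CR
    {X : Type*} [MetricSpace X] [CompactSpace X] (f : X → X) (hf : Continuous f) :
    PseudoPeriodicShadowing f ↔
      (∀ ε > 0, ∃ δ > 0, ∀ x : ℕ → X, (∀ i, ChainRecurrent f (x i)) →
        (∀ i, dist (f (x i)) (x (i + 1)) ≤ δ) →
        ∃ p : X, ChainRecurrent f p ∧ ∀ i, dist (x i) (f^[i] p) ≤ ε) := by
  open PPSaux in
  constructor
  · -- PPS implies shadowing on CR
    intro hP ε hε
    obtain ⟨δ1, hδ1, hshad⟩ := hP (ε/2) (by linarith)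
    obtain ⟨δB, hδB, hδBθ, hB⟩ := back_chain hf δ1 hδ1
    refine ⟨δB, hδB, ?_⟩
    intro x hxCR hxj
    -- back chains from x n to x 0
    have hchain : ∀ n, ∃ (k : ℕ) (c : ℕ → X), 1 ≤ k ∧ c 0 = x n ∧ c k = x 0 ∧
        ∀ i < k, dist (f (c i)) (c (i+1)) ≤ δ1 := by
      intro n
      induction n with
      | zero =>
        obtain ⟨m, c, hm, h0, hmm, hj⟩ := hxCR 0 δ1 hδ1
        exact ⟨m, c, hm, h0, hmm, hj⟩
      | succ n ih =>
        obtain ⟨k1, c1, hk1, h10, h1k, h1j⟩ := hB (x (n+1)) (x n) (hxCR n) (hxj n)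
        obtain ⟨k, c, hk, hc0, hck, hcj⟩ := ih
        set c2 : ℕ → X := fun i => if i ≤ k1 then c1 i else c (i - k1) with hc2
        have e1 : ∀ i, i ≤ k1 → c2 i = c1 i := fun i hi => by
          simp only [hc2]; rw [if_pos hi]
        have e2 : ∀ i, k1 < i → c2 i = c (i - k1) := fun i hi => by
          simp only [hc2]; rw [if_neg (by omega)]
        refine ⟨k1 + k, c2, by omega, ?_, ?_, ?_⟩
        · rw [e1 0 (by omega)]; exact h10
        · rw [e2 (k1+k) (by omega), show k1 + k - k1 = k by omega]; exact hck
        · intro i hilt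
          rcases lt_trichotomy i k1 with hlt | heq | hgt
          · rw [e1 i hlt.le, e1 (i+1) (by omega)]
            exact h1j i hlt
          · subst heq
            rw [e1 i le_rfl, e2 (i+1) (by omega), show i + 1 - i = 1 by omega, h1k, ← hc0]
            exact hcj 0 hk
          · rw [e2 i hgt, e2 (i+1) (by omega), show i + 1 - k1 = (i - k1) + 1 by omega]
            exact hcj (i - k1) (by omega)
    -- for each n, a chain recurrent point tracking x up to time n
    have hzn : ∀ n, ∃ z, ChainRecurrent f z ∧ ∀ i ≤ n, dist (x i) (f^[i] z) ≤ ε/2 := by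
      intro n
      obtain ⟨k, c, hk, hc0, hck, hcj⟩ := hchain n
      set L := n + k with hLdef
      have hL : 1 ≤ L := by omega
      set C : ℕ → X := fun i => if i ≤ n then x i else c (i - n) with hC
      have hC0 : C 0 = x 0 := by simp [hC]
      have hCL : C L = x 0 := by
        simp only [hC]
        rw [if_neg (by omega), show L - n = k by omega]
        exact hck
      have hCx : ∀ i ≤ n, C i = x i := fun i hi => by simp [hC, hi]
      have hCj : ∀ i < L, dist (f (C i)) (C (i+1)) ≤ δ1 := by
        intro i hilt
        rcases lt_trichotomy i n with hlt | heq | hgt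
        · rw [hCx i hlt.le, hCx (i+1) (by omega)]
          exact (hxj i).trans hδBθ
        · subst heq
          simp only [hC]
          rw [if_pos le_rfl, if_neg (by omega), show i + 1 - i = 1 by omega, ← hc0]
          exact hcj 0 hk
        · simp only [hC]
          rw [if_neg (by omega), if_neg (by omega), show i + 1 - n = (i - n) + 1 by omega]
          exact hcj (i - n) (by omega)
      set CC : ℕ → X := fun i => C (i % L) with hCC
      have hCCj : ∀ i, dist (f (CC i)) (CC (i+1)) ≤ δ1 :=
        cycle_mod hL (hC0.trans hCL.symm) hCj
      -- shadowing points for repeated cycles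
      have hq : ∀ N : ℕ, ∃ q, ∀ i ≤ (N+1)*L, dist (CC i) (f^[i] q) ≤ ε/2 := by
        intro N
        refine hshad ((N+1)*L) CC (Nat.one_le_iff_ne_zero.mpr (Nat.mul_ne_zero (Nat.succ_ne_zero N) (by omega))) (fun i _ => hCCj i) ?_
        simp only [hCC]
        rw [Nat.zero_mod, Nat.mul_mod_left]
      choose qs hqs using hq
      obtain ⟨q, -, φ, hφ, hqlim⟩ := IsCompact.tendsto_subseq isCompact_univ
        (x := qs) (fun N => Set.mem_univ _)
      have hqinf : ∀ i, dist (CC i) (f^[i] q) ≤ ε/2 := by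
        intro i
        refine le_of_tendsto (tendsto_const_nhds.dist
          (((hf.iterate i).tendsto q).comp hqlim)) ?_
        filter_upwards [Filter.eventually_ge_atTop i] with j hj
        refine hqs (φ j) i ?_
        calc i ≤ j := hj
          _ ≤ φ j := hφ.le_apply
          _ ≤ (φ j + 1) * L := by nlinarith [hL]
      -- ω-limit point along multiples of L
      obtain ⟨z, -, ψ, hψ, hzlim⟩ := IsCompact.tendsto_subseq isCompact_univ
        (x := fun k => f^[k * L] q) (fun k => Set.mem_univ _)
      refine ⟨z, ?_, ?_⟩
      · refine omega_CR (q := q) hf ?_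
        intro γ hγ M
        obtain ⟨N, hN⟩ := Metric.tendsto_atTop.mp hzlim γ hγ
        refine ⟨ψ (max N M) * L, ?_, (hN (max N M) (le_max_left _ _)).le⟩
        calc M ≤ max N M := le_max_right _ _
          _ ≤ ψ (max N M) := hψ.le_apply
          _ ≤ ψ (max N M) * L := by nlinarith [hL]
      · intro i hin
        refine le_of_tendsto (tendsto_const_nhds.dist
          (((hf.iterate i).tendsto z).comp hzlim)) ?_
        refine Filter.Eventually.of_forall fun j => ?_
        have key : f^[i] ((fun k => f^[k * L] q) (ψ j)) = f^[i + ψ j * L] q :=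
          (Function.iterate_add_apply f i (ψ j * L) q).symm
        simp only [Function.comp_apply, key]
        have := hqinf (i + ψ j * L)
        have hmod : CC (i + ψ j * L) = x i := by
          simp only [hCC]
          rw [Nat.add_mul_mod_self_right, Nat.mod_eq_of_lt (by omega)]
          exact hCx i hin
        rwa [hmod] at this
    choose zf hzfCR hzf using hzn
    obtain ⟨p, -, χ, hχ, hplim⟩ := IsCompact.tendsto_subseq isCompact_univ
      (x := zf) (fun n => Set.mem_univ _)
    refine ⟨p, ?_, ?_⟩
    · refine CR_of_approx hf ?_
      intro γ hγ
      obtain ⟨N, hN⟩ := Metric.tendsto_atTop.mp hplim γ hγ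
      exact ⟨zf (χ N), hzfCR (χ N), (hN N le_rfl).le⟩
    · intro i
      have : dist (x i) (f^[i] p) ≤ ε/2 := by
        refine le_of_tendsto (tendsto_const_nhds.dist
          (((hf.iterate i).tendsto p).comp hplim)) ?_
        filter_upwards [Filter.eventually_ge_atTop i] with j hj
        exact hzf (χ j) i (hj.trans hχ.le_apply)
      linarith
  · -- shadowing on CR implies PPS
    intro hS ε hε
    obtain ⟨δR, hδR, hRS⟩ := hS (ε/3) (by linarith)
    obtain ⟨γm, hγm, hmodm⟩ := unif hf (δR/3) (by positivity)
    set ε' := min (ε/3) (min γm (δR/3)) with hε'def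
    have hε'pos : 0 < ε' := by positivity
    have hε'a : ε' ≤ ε/3 := min_le_left _ _
    have hε'b : ε' ≤ γm := (min_le_right _ _).trans (min_le_left _ _)
    have hε'c : ε' ≤ δR/3 := (min_le_right _ _).trans (min_le_right _ _)
    obtain ⟨δA, hδA, hA⟩ := near_CR hf ε' hε'pos
    refine ⟨min δA (δR/3), by positivity, ?_⟩
    intro m x hm hj hx0m
    have hjA : ∀ i < m, dist (f (x i)) (x (i+1)) ≤ δA :=
      fun i hi => (hj i hi).trans (min_le_left _ _)
    have hY : ∀ i : ℕ, ∃ y, ChainRecurrent f y ∧ dist (x (i % m)) y ≤ ε' :=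
      fun i => hA m x hm hjA hx0m (i % m) (Nat.mod_lt _ hm)
    choose Y hYCR hYd using hY
    have hxmod : ∀ i, dist (f (x (i % m))) (x ((i+1) % m)) ≤ min δA (δR/3) :=
      cycle_mod hm hx0m hj
    have hYj : ∀ i, dist (f (Y i)) (Y (i+1)) ≤ δR := by
      intro i
      calc dist (f (Y i)) (Y (i+1))
          ≤ dist (f (Y i)) (f (x (i % m))) + dist (f (x (i % m))) (x ((i+1) % m))
              + dist (x ((i+1) % m)) (Y (i+1)) := dist_triangle4 _ _ _ _
        _ ≤ δR/3 + δR/3 + δR/3 := by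
            refine add_le_add (add_le_add ?_ ((hxmod i).trans (min_le_right _ _)))
              ((hYd (i+1)).trans hε'c)
            exact hmodm _ _ ((dist_comm (Y i) (x (i % m)) ▸ hYd i).trans hε'b)
        _ = δR := by ring
    obtain ⟨p, -, hps⟩ := hRS Y hYCR hYj
    refine ⟨p, ?_⟩
    intro i him
    have hxim : x (i % m) = x i := by
      rcases eq_or_lt_of_le him with h | h
      · subst h; rw [Nat.mod_self, ← hx0m]
      · rw [Nat.mod_eq_of_lt h]
    calc dist (x i) (f^[i] p) ≤ dist (x i) (Y i) + dist (Y i) (f^[i] p) := dist_triangle _ _ _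
      _ ≤ ε' + ε/3 := add_le_add (hxim ▸ hYd i) (hps i)
      _ ≤ ε := by linarith
end

section
/- Let (X,d) be a compact metric space and let f be an equicontinuous homeomorphism of X. If X is totally disconnected (topological dimension zero) and the periodic points of f are dense in X, then f has the periodic shadowing property. -/
/-! Common definitions: distances on maps/homeomorphisms of a metric space,
topological stability and shadowing-type properties. -/

variable {X : Type*} [MetricSpace X]

lemma chain_dist_le_of_compact_tot_disc
    {X : Type*} [MetricSpace X] [CompactSpace X] [TotallyDisconnectedSpace X]
    {r : ℝ} (hr : 0 < r) :
    ∃ β > 0, ∀ x y : X,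
      Relation.ReflTransGen (fun a b => dist a b ≤ β) x y → dist x y ≤ r := by
  haveI : TotallySeparatedSpace X := loc_compact_t2_tot_disc_iff_tot_sep.mp ‹_›
  by_contra h
  push_neg at h
  set S : ℕ → Set (X × X) := fun n =>
    {p : X × X | Relation.ReflTransGen (fun a b => dist a b ≤ 1 / (n + 1 : ℝ)) p.1 p.2
      ∧ r ≤ dist p.1 p.2} with hS
  set A : ℕ → Set (X × X) := fun n => closure (S n) with hA
  have hAne : ∀ n, (A n).Nonempty := by
    intro n
    obtain ⟨x, y, hchain, hxy⟩ := h (1 / (n + 1 : ℝ)) (by positivity)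
    exact ⟨(x, y), subset_closure ⟨hchain, hxy.le⟩⟩
  have hmono : ∀ n, A (n + 1) ⊆ A n := by
    intro n
    apply closure_mono
    rintro ⟨x, y⟩ ⟨hchain, hd⟩
    refine ⟨Relation.ReflTransGen.mono (fun a b hab => le_trans hab ?_) _ _ hchain, hd⟩
    apply one_div_le_one_div_of_le (by positivity)
    push_cast; linarith
  have hcl : ∀ n, IsClosed (A n) := fun n => isClosed_closure
  obtain ⟨⟨x, y⟩, hq⟩ := IsCompact.nonempty_iInter_of_sequence_nonempty_isCompact_isClosed
    A hmono hAne ((hcl 0).isCompact) hcl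
  simp only [Set.mem_iInter] at hq
  have hdxy : r ≤ dist x y := by
    have hsub : A 0 ⊆ {p : X × X | r ≤ dist p.1 p.2} := by
      apply closure_minimal (fun p hp => hp.2)
      exact isClosed_le continuous_const (continuous_dist.comp
        (continuous_fst.prodMk continuous_snd))
    exact hsub (hq 0)
  have hxy : x ≠ y := by
    intro hxy; rw [hxy, dist_self] at hdxy; linarith
  obtain ⟨U, V, hUo, hVo, hxU, hyV, hcover, hdisj⟩ :=
    TotallySeparatedSpace.isTotallySeparated_univ (Set.mem_univ x) (Set.mem_univ y) hxy
  have hyU : y ∉ U := fun hy => Set.disjoint_left.mp hdisj hy hyV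
  have hUcne : (Uᶜ : Set X).Nonempty := ⟨y, hyU⟩
  have hUccl : IsClosed (Uᶜ : Set X) := hUo.isClosed_compl
  have hUc : IsClosed U := by
    have hVc : Uᶜ = V := by
      apply Set.Subset.antisymm
      · intro a ha
        rcases hcover (Set.mem_univ a) with h' | h'
        · exact absurd h' ha
        · exact h'
      · exact fun a ha => Set.disjoint_right.mp hdisj ha
    rw [← isOpen_compl_iff, hVc]; exact hVo
  -- positive gap between U and Uᶜ
  obtain ⟨a₀, ha₀U, ha₀min⟩ := hUc.isCompact.exists_isMinOn ⟨x, hxU⟩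
    ((Metric.continuous_infDist_pt (Uᶜ : Set X)).continuousOn)
  set γ := Metric.infDist a₀ (Uᶜ : Set X) with hγ
  have hγpos : 0 < γ := (hUccl.notMem_iff_infDist_pos hUcne).mp (by simpa using ha₀U)
  have hgap : ∀ a ∈ U, ∀ b, b ∉ U → γ ≤ dist a b := by
    intro a ha b hb
    exact le_trans (ha₀min ha) (Metric.infDist_le_dist_of_mem hb)
  obtain ⟨n, hn⟩ := exists_nat_one_div_lt hγpos
  have := hq n
  rw [hA, Metric.mem_closure_iff] at this
  obtain ⟨⟨a, b⟩, ⟨hchain, hdab⟩, hclose⟩ := this γ hγpos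
  dsimp only at hchain hdab
  rw [Prod.dist_eq, max_lt_iff] at hclose
  dsimp only at hclose
  have haU : a ∈ U := by
    by_contra haU
    exact absurd hclose.1 (not_lt.mpr (hgap x hxU a haU))
  have hbU : b ∈ U := by
    clear hdab hclose
    induction hchain with
    | refl => exact haU
    | tail _ hcd ih =>
      by_contra hd
      have := hgap _ ih _ hd
      have : γ ≤ 1 / (n + 1 : ℝ) := this.trans hcd
      linarith
  exact absurd hclose.2 (not_lt.mpr (by rw [dist_comm]; exact hgap b hbU y hyU))

/-- An equicontinuous homeomorphism of a compact totally disconnected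
(zero-dimensional) metric space whose periodic points are dense has the periodic
shadowing property. -/
theorem periodicShadowing_of_equicontinuous_dense_periodic
    {X : Type*} [MetricSpace X] [CompactSpace X] [TotallyDisconnectedSpace X]
    (f : X ≃ₜ X) (hf : EquicontinuousHomeo f)
    (hper : Dense (Function.periodicPts (f : X → X))) :
    PeriodicShadowing f := by
  intro ε hε
  obtain ⟨β, hβ, hchainlem⟩ := chain_dist_le_of_compact_tot_disc (X := X) hε
  obtain ⟨δ, hδ, hδE⟩ := hf β hβ
  refine ⟨δ, hδ, ?_⟩
  intro m x hm hcyc _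
  -- the relation E : uniformly β-close along all iterates
  set E : X → X → Prop := fun a b =>
    ∀ n : ℤ, dist ((f.toEquiv ^ n) a) ((f.toEquiv ^ n) b) ≤ β with hE
  have hEsymm : Symmetric E := fun a b hab n => by rw [dist_comm]; exact hab n
  have hEdist : ∀ a b, E a b → dist a b ≤ β := by
    intro a b hab
    have := hab 0
    simpa using this
  have hEf : ∀ a b, E a b → E (f a) (f b) := by
    intro a b hab n
    have key : ∀ c : X, (f.toEquiv ^ n) (f c) = (f.toEquiv ^ (n + 1)) c := by
      intro c
      rw [zpow_add_one, Equiv.Perm.mul_apply]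
      rfl
    rw [key, key]
    exact hab (n + 1)
  set R : X → X → Prop := Relation.ReflTransGen E with hR
  have hRsymm : Symmetric R := by
    haveI : Std.Symm E := ⟨fun a b h => hEsymm h⟩
    have hS : Std.Symm (Relation.ReflTransGen E) := Relation.ReflTransGen.symmetric
    exact fun a b h => hS.symm a b h
  have hRf : ∀ a b, R a b → R (f a) (f b) := by
    intro a b hab
    induction hab with
    | refl => exact Relation.ReflTransGen.refl
    | tail _ hcd ih => exact ih.tail (hEf _ _ hcd)
  have hRdist : ∀ a b, R a b → dist a b ≤ ε := by
    intro a b hab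
    exact hchainlem a b (Relation.ReflTransGen.mono (fun c d hcd => hEdist c d hcd) _ _ hab)
  -- choose a periodic point near x 0
  obtain ⟨p, hpPer, hpdist⟩ := hper.exists_dist_lt (x 0) hδ
  -- the key induction
  have hkey : ∀ i ≤ m, R (x i) ((f : X → X)^[i] p) := by
    intro i
    induction i with
    | zero =>
      intro _
      exact Relation.ReflTransGen.single (hδE _ _ (by rw [dist_comm] at hpdist ⊢; exact hpdist.le))
    | succ i ih =>
      intro hi
      have h1 : R (x i) ((f : X → X)^[i] p) := ih (Nat.le_of_succ_le hi)
      have h2 : R (f (x i)) ((f : X → X)^[i + 1] p) := by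
        rw [Function.iterate_succ_apply']
        exact hRf _ _ h1
      have h3 : E (f (x i)) (x (i + 1)) := hδE _ _ (hcyc i (Nat.lt_of_succ_le hi))
      exact (hRsymm (Relation.ReflTransGen.single h3)).trans h2
  exact ⟨p, hpPer, fun i hi => hRdist _ _ (hkey i hi)⟩
end

section
/- Let (X,d) be a compact metric space and let f be an equicontinuous homeomorphism of X. If X is totally disconnected (topological dimension zero), then every point of X is regularly recurrent for f. -/
/-! Common definitions: distances on maps/homeomorphisms of a metric space,
topological stability and shadowing-type properties. -/

variable {X : Type*} [MetricSpace X]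

private lemma zpow_nat_apply' {X : Type*} [MetricSpace X] (f : X ≃ₜ X) (n : ℕ) (y : X) :
    (f.toEquiv ^ (n : ℤ)) y = (⇑f)^[n] y := by
  induction n generalizing y with
  | zero => simp
  | succ n ih =>
    push_cast
    rw [zpow_add, zpow_one, Equiv.Perm.mul_apply, Function.iterate_succ_apply, ← ih]
    rfl

private lemma shift_apply' {X : Type*} [MetricSpace X] (f : X ≃ₜ X) (i m : ℕ) (x : X) :
    (f.toEquiv ^ ((m : ℤ) - (i : ℤ))) ((⇑f)^[i] x) = (⇑f)^[m] x := by
  rw [← zpow_nat_apply', ← Equiv.Perm.mul_apply, ← zpow_add, sub_add_cancel, zpow_nat_apply']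

/-- For an equicontinuous homeomorphism of a compact totally
disconnected (zero-dimensional) metric space, every point is regularly recurrent. -/
theorem regularly_recurrent_of_equicontinuous
    {X : Type*} [MetricSpace X] [CompactSpace X] [TotallyDisconnectedSpace X]
    (f : X ≃ₜ X) (hf : EquicontinuousHomeo f) :
    ∀ x : X, ∀ U ∈ nhds x, ∃ k : ℕ, 0 < k ∧ ∀ n : ℕ, (f : X → X)^[k * n] x ∈ U := by
  intro x U hU
  obtain ⟨W, hWU, hWopen, hxW⟩ := mem_nhds_iff.mp hU
  obtain ⟨V, hVclopen, hxV, hVW⟩ := compact_exists_isClopen_in_isOpen hWopen hxW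
  have hVU : V ⊆ U := hVW.trans hWU
  by_cases hcompl : Vᶜ = ∅
  · refine ⟨1, one_pos, fun n => hVU ?_⟩
    have : ∀ y : X, y ∈ V := fun y => by
      by_contra h; exact absurd (Set.eq_empty_iff_forall_notMem.mp hcompl y) (by simpa using h)
    exact this _
  obtain ⟨w₀, hw₀⟩ := Set.nonempty_iff_ne_empty.mpr hcompl
  -- separation constant
  have hVcomp : IsCompact V := hVclopen.isClosed.isCompact
  obtain ⟨v₀, hv₀V, hmin⟩ := hVcomp.exists_isMinOn ⟨x, hxV⟩
    ((Metric.continuous_infDist_pt (Vᶜ)).continuousOn)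
  have hVCclosed : IsClosed (Vᶜ) := hVclopen.isOpen.isClosed_compl
  have hv₀pos : 0 < Metric.infDist v₀ (Vᶜ) :=
    (hVCclosed.notMem_iff_infDist_pos ⟨w₀, hw₀⟩).mp (by simpa using hv₀V)
  set ε := Metric.infDist v₀ (Vᶜ) / 2 with hε
  have hεpos : 0 < ε := by positivity
  have hsep : ∀ v ∈ V, ∀ w, w ∉ V → 2 * ε ≤ dist v w := by
    intro v hv w hw
    have h1 : Metric.infDist v₀ (Vᶜ) ≤ Metric.infDist v (Vᶜ) := hmin hv
    have h2 : Metric.infDist v (Vᶜ) ≤ dist v w := Metric.infDist_le_dist_of_mem hw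
    rw [hε]; linarith
  obtain ⟨δ, hδpos, hδ⟩ := hf ε hεpos
  -- pigeonhole
  obtain ⟨a, φ, hφmono, hφtend⟩ := CompactSpace.tendsto_subseq (fun n => (⇑f)^[n] x)
  obtain ⟨N, hN⟩ := (Metric.tendsto_atTop.mp hφtend) (δ / 2) (by positivity)
  set i := φ N with hi
  set j := φ (N + 1) with hj
  have hijlt : i < j := hφmono (Nat.lt_succ_self N)
  have hij : dist ((⇑f)^[i] x) ((⇑f)^[j] x) ≤ δ := by
    have h1 := hN N le_rfl
    have h2 := hN (N + 1) (Nat.le_succ N)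
    calc dist ((⇑f)^[i] x) ((⇑f)^[j] x)
        ≤ dist ((⇑f)^[i] x) a + dist ((⇑f)^[j] x) a := dist_triangle_right _ _ _
      _ ≤ δ := by simp only [Function.comp] at h1 h2; linarith
  set k := j - i with hk
  have hkpos : 0 < k := Nat.sub_pos_of_lt hijlt
  have hjik : j = i + k := by omega
  have key : ∀ m : ℕ, dist ((⇑f)^[m] x) ((⇑f)^[m + k] x) ≤ ε := by
    intro m
    have h := hδ _ _ hij ((m : ℤ) - (i : ℤ))
    rw [shift_apply'] at h
    have he : (m : ℤ) - (i : ℤ) = ((m + k : ℕ) : ℤ) - (j : ℤ) := by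
      rw [hjik]; push_cast; ring
    rw [he, shift_apply'] at h
    exact h
  have main : ∀ n : ℕ, (⇑f)^[k * n] x ∈ V := by
    intro n
    induction n with
    | zero => simpa using hxV
    | succ n ih =>
      by_contra h
      have h1 := key (k * n)
      have h2 := hsep _ ih _ h
      rw [show k * n + k = k * (n + 1) by ring] at h1
      linarith
  exact ⟨k, hkpos, fun n => hVU (main n)⟩
end

section
/- There exists a Cantor space (X,d) and a homeomorphism f of X with the following five properties: (1) the periodic points of f are dense in X; (2) f is equicontinuous; (3) f has the periodic shadowing property; (4) f does not have the strict periodic shadowing property; (5) f³ has the strict periodic shadowing property. In particular, the periodic shadowing property does not imply the strict periodic shadowing property, and a homeomorphism whose third iterate has the strict periodic shadowing property need not have it itself. -/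
/-! Common definitions: distances on maps/homeomorphisms of a metric space,
topological stability and shadowing-type properties. -/

variable {X : Type*} [MetricSpace X]

namespace CantorCounterexample

abbrev E (n : ℕ) : Type := ZMod (2 ^ (n + 1)) × Option (ZMod 3)

instance (n : ℕ) : NeZero (2 ^ (n + 1) : ℕ) := ⟨by positivity⟩
instance (n : ℕ) : TopologicalSpace (E n) := ⊥
instance (n : ℕ) : DiscreteTopology (E n) := ⟨rfl⟩

abbrev Xc : Type := ∀ n, E n

noncomputable instance : MetricSpace Xc := PiNat.metricSpace

lemma dist_eq_of_ne' {x y : Xc} (h : x ≠ y) : dist x y = (1/2 : ℝ) ^ PiNat.firstDiff x y :=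
  PiNat.dist_eq_of_ne h

lemma pow_half_anti {a b : ℕ} (h : a ≤ b) : ((1:ℝ)/2) ^ b ≤ (1/2) ^ a :=
  pow_le_pow_of_le_one (by norm_num) (by norm_num) h

/-- If two points agree below `K`, their distance is at most `(1/2)^K`. -/
lemma dist_le_pow {x y : Xc} {K : ℕ} (h : ∀ n < K, x n = y n) :
    dist x y ≤ (1/2 : ℝ) ^ K := by
  rcases eq_or_ne x y with rfl | hne
  · rw [dist_self]
    positivity
  · rw [dist_eq_of_ne' hne]
    apply pow_half_anti
    by_contra hlt
    exact PiNat.apply_firstDiff_ne hne (h _ (by omega))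

/-- If the distance is at most `(1/2)^(K+1)`, the points agree up to `K`. -/
lemma apply_eq_of_dist_le {x y : Xc} {K : ℕ} (h : dist x y ≤ (1/2 : ℝ) ^ (K+1)) :
    ∀ n ≤ K, x n = y n := by
  intro n hn
  rcases eq_or_ne x y with rfl | hne
  · rfl
  · rw [dist_eq_of_ne' hne] at h
    have hfd : K + 1 ≤ PiNat.firstDiff x y := by
      by_contra hlt
      have h1 : ((1:ℝ)/2) ^ K ≤ (1/2) ^ PiNat.firstDiff x y := pow_half_anti (by omega)
      have h2 : ((1:ℝ)/2) ^ (K+1) < (1/2) ^ K := by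
        rw [pow_succ]
        have hp : (0:ℝ) < (1/2) ^ K := by positivity
        linarith
      linarith
    exact PiNat.apply_eq_of_lt_firstDiff (by omega)

lemma dist_mono {x y x' y' : Xc} (h : ∀ n, x n = y n → x' n = y' n) :
    dist x' y' ≤ dist x y := by
  rcases eq_or_ne x' y' with rfl | hne'
  · simp [dist_self, dist_nonneg]
  rcases eq_or_ne x y with rfl | hne
  · exact absurd (funext fun n => h n rfl) hne'
  rw [dist_eq_of_ne' hne, dist_eq_of_ne' hne']
  apply pow_half_anti
  by_contra hlt
  exact PiNat.apply_firstDiff_ne hne'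
    (h _ (PiNat.apply_eq_of_lt_firstDiff (by omega)))

/-! ### The map -/

def step (n : ℕ) : E n → E n
  | (y, none) => (y + 1, none)
  | (y, some t) => (y, some (t + 1))

def stepInv (n : ℕ) : E n → E n
  | (y, none) => (y - 1, none)
  | (y, some t) => (y, some (t - 1))

lemma stepInv_step (n : ℕ) (p : E n) : stepInv n (step n p) = p := by
  rcases p with ⟨y, _ | t⟩ <;> simp [step, stepInv]

lemma step_stepInv (n : ℕ) (p : E n) : step n (stepInv n p) = p := by
  rcases p with ⟨y, _ | t⟩ <;> simp [step, stepInv]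

def F : Xc → Xc := fun x n => step n (x n)
def Finv : Xc → Xc := fun x n => stepInv n (x n)

def fE : Xc ≃ Xc where
  toFun := F
  invFun := Finv
  left_inv := fun x => funext fun n => stepInv_step n (x n)
  right_inv := fun x => funext fun n => step_stepInv n (x n)

lemma F_isometry : Isometry F := by
  apply Isometry.of_dist_eq
  intro a b
  apply le_antisymm
  · exact dist_mono fun n h => by simp [F, h]
  · apply dist_mono
    intro n h
    have h' : step n (a n) = step n (b n) := h
    have h2 := congrArg (stepInv n) h'
    rwa [stepInv_step, stepInv_step] at h2

lemma Finv_isometry : Isometry Finv := by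
  apply Isometry.of_dist_eq
  intro a b
  apply le_antisymm
  · exact dist_mono fun n h => by simp [Finv, h]
  · apply dist_mono
    intro n h
    have h' : stepInv n (a n) = stepInv n (b n) := h
    have h2 := congrArg (step n) h'
    rwa [step_stepInv, step_stepInv] at h2

noncomputable def fH : Xc ≃ₜ Xc where
  toEquiv := fE
  continuous_toFun := F_isometry.continuous
  continuous_invFun := Finv_isometry.continuous

lemma fH_coe : (fH : Xc → Xc) = F := rfl

def σ3 (n : ℕ) : E n → E n := fun q => step n (step n (step n q))

lemma g_coe : (((fH.trans fH).trans fH : Xc ≃ₜ Xc) : Xc → Xc) = fun x n => σ3 n (x n) := rfl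

/-! ### Iterates -/

lemma iter_coord (σ : ∀ n, E n → E n) (i : ℕ) (x : Xc) (n : ℕ) :
    ((fun (x : Xc) n => σ n (x n))^[i] x) n = (σ n)^[i] (x n) := by
  induction i generalizing x with
  | zero => rfl
  | succ i ih =>
    rw [Function.iterate_succ_apply, Function.iterate_succ_apply]
    exact ih _

lemma step_iter_none (n i : ℕ) (y : ZMod (2 ^ (n+1))) :
    (step n)^[i] (y, none) = (y + (i : ZMod (2 ^ (n+1))), none) := by
  induction i with
  | zero => simp
  | succ i ih =>
    rw [Function.iterate_succ_apply', ih]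
    show (y + (i : ZMod (2 ^ (n+1))) + 1, none) = _
    rw [Nat.cast_succ, add_assoc]

lemma step_iter_some (n i : ℕ) (y : ZMod (2 ^ (n+1))) (t : ZMod 3) :
    (step n)^[i] (y, some t) = (y, some (t + (i : ZMod 3))) := by
  induction i with
  | zero => simp
  | succ i ih =>
    rw [Function.iterate_succ_apply', ih]
    show (y, some (t + (i : ZMod 3) + 1)) = _
    rw [Nat.cast_succ, add_assoc]

/-- Tracking: if a cycle follows the dynamics exactly on coordinates `≤ K`. -/
lemma track {σ : ∀ n, E n → E n} {K m : ℕ} {x : ℕ → Xc}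
    (hc : ∀ i < m, ∀ n ≤ K, σ n (x i n) = x (i+1) n) :
    ∀ i ≤ m, ∀ n ≤ K, x i n = (σ n)^[i] (x 0 n) := by
  intro i
  induction i with
  | zero => intro _ n _; rfl
  | succ i ih =>
    intro hi n hn
    rw [← hc i (by omega) n hn, ih (by omega) n hn]
    exact (Function.iterate_succ_apply' (σ n) i (x 0 n)).symm

/-! ### The five dynamical properties -/

lemma dvd_cast_zero {q M : ℕ} (h : q ∣ M) : ((M : ℕ) : ZMod q) = 0 := by
  rw [ZMod.natCast_eq_zero_iff]
  exact h

lemma dense_periodic : Dense (Function.periodicPts (fH : Xc → Xc)) := by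
  intro x
  rw [Metric.mem_closure_iff]
  intro ε hε
  obtain ⟨K, hK⟩ := exists_pow_lt_of_lt_one hε (by norm_num : (1:ℝ)/2 < 1)
  classical
  set p : Xc := fun n => if n < K then x n else ((0 : ZMod (2^(n+1))), some (0 : ZMod 3)) with hp
  have hper : Function.IsPeriodicPt (fH : Xc → Xc) (3 * 2 ^ K) p := by
    show F^[3 * 2 ^ K] p = p
    funext n
    rw [show (F^[3 * 2 ^ K] p) n = (step n)^[3 * 2 ^ K] (p n) from iter_coord step _ p n]
    rcases hq : p n with ⟨y, o⟩
    cases o with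
    | none =>
      rw [step_iter_none]
      have hn : n < K := by
        by_contra hnK
        have : p n = ((0 : ZMod (2^(n+1))), some (0 : ZMod 3)) := by simp [hp, hnK]
        rw [hq] at this
        simp at this
      have : ((3 * 2 ^ K : ℕ) : ZMod (2^(n+1))) = 0 :=
        dvd_cast_zero (Dvd.dvd.mul_left (pow_dvd_pow 2 (by omega)) 3)
      rw [this, add_zero]
    | some t =>
      rw [step_iter_some]
      have : ((3 * 2 ^ K : ℕ) : ZMod 3) = 0 := dvd_cast_zero (q := 3) (M := 3*2^K) ⟨2^K, rfl⟩
      rw [this, add_zero]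
  refine ⟨p, ⟨3 * 2 ^ K, by positivity, hper⟩, ?_⟩
  have : dist x p ≤ (1/2 : ℝ) ^ K := dist_le_pow fun n hn => by simp [hp, hn]
  linarith

lemma zpow_dist (k : ℤ) (a b : Xc) :
    dist ((fE ^ k) a) ((fE ^ k) b) = dist a b := by
  induction k using Int.induction_on generalizing a b with
  | zero => simp
  | succ i ih =>
    rw [zpow_add_one]
    show dist ((fE ^ (i:ℤ)) (fE a)) ((fE ^ (i:ℤ)) (fE b)) = _
    rw [ih]
    exact F_isometry.dist_eq a b
  | pred i ih =>
    rw [zpow_sub_one]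
    show dist ((fE ^ (-i:ℤ)) (fE⁻¹ a)) ((fE ^ (-i:ℤ)) (fE⁻¹ b)) = _
    rw [ih]
    exact Finv_isometry.dist_eq a b

lemma equicont : EquicontinuousHomeo fH := by
  intro ε hε
  refine ⟨ε, hε, fun x y hxy k => ?_⟩
  rw [show fH.toEquiv = fE from rfl, zpow_dist]
  exact hxy

lemma periodic_shadowing : PeriodicShadowing fH := by
  intro ε hε
  obtain ⟨K, hK⟩ := exists_pow_lt_of_lt_one hε (by norm_num : (1:ℝ)/2 < 1)
  refine ⟨(1/2 : ℝ)^(K+1), by positivity, ?_⟩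
  intro m x hm hcyc hx0m
  classical
  have hstep : ∀ i < m, ∀ n ≤ K, step n (x i n) = x (i+1) n := by
    intro i hi n hn
    exact apply_eq_of_dist_le (hcyc i hi) n hn
  have htr := track hstep
  have hret : ∀ n ≤ K, (step n)^[m] (x 0 n) = x 0 n := by
    intro n hn
    rw [← htr m le_rfl n hn, ← hx0m]
  set p : Xc := fun n => if n ≤ K then x 0 n else ((0 : ZMod (2^(n+1))), some (0 : ZMod 3)) with hp
  have hper : Function.IsPeriodicPt (fH : Xc → Xc) (m * 3) p := by
    show F^[m * 3] p = p
    funext n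
    rw [show (F^[m * 3] p) n = (step n)^[m * 3] (p n) from iter_coord step _ p n]
    by_cases hn : n ≤ K
    · have hpn : p n = x 0 n := by simp [hp, hn]
      rw [hpn, Function.iterate_mul]
      exact (Function.IsFixedPt.iterate (hret n hn) 3)
    · have hpn : p n = ((0 : ZMod (2^(n+1))), some (0 : ZMod 3)) := by simp [hp, hn]
      rw [hpn, step_iter_some, dvd_cast_zero (q := 3) (M := m*3) ⟨m, by ring⟩, add_zero]
  refine ⟨p, ⟨m * 3, by omega, hper⟩, ?_⟩
  intro i hi
  have hd : dist (x i) ((fH : Xc → Xc)^[i] p) ≤ (1/2 : ℝ)^(K+1) := by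
    apply dist_le_pow
    intro n hn
    have hn' : n ≤ K := by omega
    rw [show ((fH : Xc → Xc)^[i] p) n = (step n)^[i] (p n) from iter_coord step i p n]
    rw [show p n = x 0 n by simp [hp, hn']]
    exact htr i hi n hn'
  have : ((1:ℝ)/2)^(K+1) ≤ (1/2 : ℝ)^K := pow_half_anti (by omega)
  linarith

lemma not_strict : ¬ StrictPeriodicShadowing fH := by
  intro h
  obtain ⟨δ, hδ, H⟩ := h 1 one_pos
  obtain ⟨K, hK⟩ := exists_pow_lt_of_lt_one hδ (by norm_num : (1:ℝ)/2 < 1)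
  set x0 : Xc := fun n => ((0 : ZMod (2^(n+1))), none) with hx0
  set m : ℕ := 2 ^ K with hmdef
  set xs : ℕ → Xc := fun i => F^[i % m] x0 with hxs
  have hm : 1 ≤ m := Nat.one_le_two_pow
  have hcyc : ∀ i < m, dist (fH (xs i)) (xs (i+1)) ≤ δ := by
    intro i hi
    rcases eq_or_lt_of_le (Nat.succ_le_of_lt hi) with he | hlt
    · -- i + 1 = m
      have h1 : xs (i+1) = x0 := by
        rw [hxs]
        simp only [← he, Nat.mod_self]
        rfl
      have h2 : fH (xs i) = F^[m] x0 := by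
        rw [fH_coe, hxs]
        simp only [Nat.mod_eq_of_lt hi]
        rw [← Function.iterate_succ_apply' F i x0, he]
      rw [h1, h2]
      have : dist (F^[m] x0) x0 ≤ (1/2 : ℝ)^K := by
        apply dist_le_pow
        intro n hn
        rw [show (F^[m] x0) n = (step n)^[m] (x0 n) from iter_coord step m x0 n]
        show (step n)^[m] ((0 : ZMod (2^(n+1))), none) = ((0 : ZMod (2^(n+1))), none)
        rw [step_iter_none, dvd_cast_zero (pow_dvd_pow 2 (by omega)), add_zero]
      linarith
    · -- i + 1 < m
      have h1 : xs (i+1) = fH (xs i) := by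
        rw [fH_coe, hxs]
        simp only [Nat.mod_eq_of_lt hi, Nat.mod_eq_of_lt hlt]
        exact Function.iterate_succ_apply' F i x0
      rw [h1, dist_self]
      linarith
  have hx0m : xs 0 = xs m := by
    rw [hxs]
    simp [Nat.mod_self]
  obtain ⟨p, hp, -⟩ := H m xs hm hcyc hx0m
  have hK' := congrFun hp K
  rw [show ((fH : Xc → Xc)^[m] p) K = (step K)^[m] (p K) from iter_coord step m p K] at hK'
  rcases hq : p K with ⟨y, o⟩
  rw [hq] at hK'
  cases o with
  | none =>
    rw [step_iter_none] at hK'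
    have h0 : ((m:ℕ) : ZMod (2^(K+1))) = 0 := by
      have := (Prod.mk.injEq _ _ _ _).mp hK'
      have hy : y + ((m:ℕ) : ZMod (2^(K+1))) = y := this.1
      rwa [add_eq_left] at hy
    rw [ZMod.natCast_eq_zero_iff] at h0
    have := (Nat.pow_dvd_pow_iff_le_right (by norm_num : 1 < 2)).mp h0
    omega
  | some t =>
    rw [step_iter_some] at hK'
    have h0 : ((m:ℕ) : ZMod 3) = 0 := by
      have := (Prod.mk.injEq _ _ _ _).mp hK'
      have ht : t + ((m:ℕ) : ZMod 3) = t := by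
        have := this.2
        exact Option.some_injective _ this
      rwa [add_eq_left] at ht
    rw [ZMod.natCast_eq_zero_iff] at h0
    have h3 : (3:ℕ) ∣ 2 := (Nat.Prime.dvd_of_dvd_pow (by norm_num)) h0
    norm_num at h3

lemma strict_cube : StrictPeriodicShadowing ((fH.trans fH).trans fH) := by
  intro ε hε
  obtain ⟨K, hK⟩ := exists_pow_lt_of_lt_one hε (by norm_num : (1:ℝ)/2 < 1)
  refine ⟨(1/2 : ℝ)^(K+1), by positivity, ?_⟩
  intro m x hm hcyc hx0m
  classical
  have hstep : ∀ i < m, ∀ n ≤ K, σ3 n (x i n) = x (i+1) n := by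
    intro i hi n hn
    exact apply_eq_of_dist_le (hcyc i hi) n hn
  have htr := track hstep
  have hret : ∀ n ≤ K, (σ3 n)^[m] (x 0 n) = x 0 n := by
    intro n hn
    rw [← htr m le_rfl n hn, ← hx0m]
  set p : Xc := fun n => if n ≤ K then x 0 n else ((0 : ZMod (2^(n+1))), some (0 : ZMod 3)) with hp
  have hfix : ∀ n, σ3 n ((0 : ZMod (2^(n+1))), some (0 : ZMod 3)) = ((0 : ZMod (2^(n+1))), some (0 : ZMod 3)) := by
    intro n
    show ((0 : ZMod (2^(n+1))), some (0 + 1 + 1 + 1 : ZMod 3)) = _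
    norm_num
    decide
  have hg : (((fH.trans fH).trans fH : Xc ≃ₜ Xc) : Xc → Xc)^[m] p = p := by
    funext n
    rw [g_coe, iter_coord σ3 m p n]
    by_cases hn : n ≤ K
    · rw [show p n = x 0 n by simp [hp, hn]]
      exact hret n hn
    · rw [show p n = ((0 : ZMod (2^(n+1))), some (0 : ZMod 3)) by simp [hp, hn]]
      exact Function.IsFixedPt.iterate (hfix n) m
  refine ⟨p, hg, ?_⟩
  intro i hi
  have hd : dist (x i) ((((fH.trans fH).trans fH : Xc ≃ₜ Xc) : Xc → Xc)^[i] p) ≤ (1/2 : ℝ)^(K+1) := by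
    apply dist_le_pow
    intro n hn
    have hn' : n ≤ K := by omega
    rw [g_coe, iter_coord σ3 i p n]
    rw [show p n = x 0 n by simp [hp, hn']]
    exact htr i hi n hn'
  have : ((1:ℝ)/2)^(K+1) ≤ (1/2 : ℝ)^K := pow_half_anti (by omega)
  linarith

lemma perfect : PerfectSpace Xc := by
  rw [perfectSpace_iff_forall_not_isolated]
  intro x
  rw [← mem_closure_iff_nhdsWithin_neBot]
  rw [Metric.mem_closure_iff]
  intro ε hε
  obtain ⟨K, hK⟩ := exists_pow_lt_of_lt_one hε (by norm_num : (1:ℝ)/2 < 1)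
  classical
  set v : E K := ((x K).1, match (x K).2 with | none => some 0 | some _ => none) with hv
  refine ⟨Function.update x K v, ?_, ?_⟩
  · intro h
    have := congrFun h K
    rw [Function.update_self] at this
    rcases ho : (x K).2 with _ | t <;> rw [hv] at this <;>
      · rw [ho] at this
        have h2 := congrArg Prod.snd this
        simp [ho] at h2
  · have : dist x (Function.update x K v) ≤ (1/2 : ℝ)^K := by
      apply dist_le_pow
      intro n hn
      rw [Function.update_of_ne (by omega)]
    linarith

end CantorCounterexample


/-- There is a Cantor space `X` and a homeomorphism `f` of `X` such
that: (1) the periodic points of `f` are dense; (2) `f` is equicontinuous;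
(3) `f` has the periodic shadowing property; (4) `f` does not have the strict
periodic shadowing property; (5) `f³` has the strict periodic shadowing property. -/
theorem exists_cantor_example_periodic_not_strict :
    ∃ (X : Type) (_ : MetricSpace X), CompactSpace X ∧ PerfectSpace X ∧
      TotallyDisconnectedSpace X ∧ Nonempty X ∧
      ∃ f : X ≃ₜ X,
        Dense (Function.periodicPts (f : X → X)) ∧
        EquicontinuousHomeo f ∧
        PeriodicShadowing f ∧
        ¬ StrictPeriodicShadowing f ∧
        StrictPeriodicShadowing ((f.trans f).trans f) := by
  refine ⟨CantorCounterexample.Xc, inferInstance, inferInstance, CantorCounterexample.perfect,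
    inferInstance, ⟨fun n => ((0 : ZMod (2^(n+1))), none)⟩, CantorCounterexample.fH,
    CantorCounterexample.dense_periodic, CantorCounterexample.equicont,
    CantorCounterexample.periodic_shadowing, CantorCounterexample.not_strict,
    CantorCounterexample.strict_cube⟩
end
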